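/- arXiv:1505.07906 — 8 statements merged into one kernel-verified Lean document; each statement's English description precedes it below -/
import Mathlib

section
/- A sequence σ : ℤ≥0 → ℂ is Lipschitz continuous with respect to the metric ρ(m,n) = |√m − √n| if and only if sup over n of √(n+1)·|σ(n+1) − σ(n)| is finite. Moreover, if that supremum equals M, then |σ(m) − σ(n)| ≤ 2M·ρ(m,n) for all m, n. -/
/-!
Since `√(n+1) - √n = 1 / (√(n+1) + √n)` lies between `1 / (2√(n+1))` and `1 / √(n+1)`, the bound
`√(n+1) ‖σ (n+1) - σ n‖ ≤ M` makes each increment of `σ` at most `2M (√(n+1) - √n)`, and these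
telescope to `2M |√m - √n|`. Conversely, a Lipschitz constant `C` bounds `√(n+1) ‖σ (n+1) - σ n‖`
by `|C| √(n+1) (√(n+1) - √n) ≤ |C|`.
-/

open Finset

theorem dist_le_abs_sub_of_dist_succ_le {α : Type*} [PseudoMetricSpace α] {σ : ℕ → α}
    {f : ℕ → ℝ} (h : ∀ k, dist (σ k) (σ (k + 1)) ≤ f (k + 1) - f k) (m n : ℕ) :
    dist (σ m) (σ n) ≤ |f m - f n| := by
  wlog hmn : m ≤ n generalizing m n
  · rw [dist_comm, abs_sub_comm]
    exact this n m (le_of_not_ge hmn)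
  calc dist (σ m) (σ n) ≤ ∑ k ∈ Ico m n, (f (k + 1) - f k) :=
        dist_le_Ico_sum_of_dist_le hmn fun _ _ => h _
    _ = f n - f m := sum_Ico_sub f hmn
    _ ≤ |f m - f n| := by rw [abs_sub_comm]; exact le_abs_self _

namespace Real

theorem sqrt_add_one_mul_sub_sqrt_le_one {x : ℝ} (hx : 0 ≤ x) :
    √(x + 1) * (√(x + 1) - √x) ≤ 1 := by
  have hle : √x ≤ √(x + 1) := sqrt_le_sqrt (by linarith)
  nlinarith [sq_sqrt hx, sq_sqrt (by linarith : 0 ≤ x + 1), sqrt_nonneg x]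

theorem one_le_two_mul_sqrt_add_one_mul_sub_sqrt {x : ℝ} (hx : 0 ≤ x) :
    1 ≤ 2 * √(x + 1) * (√(x + 1) - √x) := by
  nlinarith [sq_sqrt hx, sq_sqrt (by linarith : 0 ≤ x + 1), sq_nonneg (√(x + 1) - √x)]

theorem le_two_mul_mul_sqrt_add_one_sub_sqrt {x d M : ℝ} (hx : 0 ≤ x) (hd : 0 ≤ d)
    (h : √(x + 1) * d ≤ M) : d ≤ 2 * M * (√(x + 1) - √x) := by
  have : √x ≤ √(x + 1) := sqrt_le_sqrt (by linarith)
  calc d = d * 1 := (mul_one d).symm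
    _ ≤ d * (2 * √(x + 1) * (√(x + 1) - √x)) :=
        mul_le_mul_of_nonneg_left (one_le_two_mul_sqrt_add_one_mul_sub_sqrt hx) hd
    _ = 2 * (√(x + 1) * d) * (√(x + 1) - √x) := by ring
    _ ≤ 2 * M * (√(x + 1) - √x) := by gcongr

theorem sqrt_add_one_mul_le_abs_of_le_mul_abs_sub_sqrt {x d C : ℝ} (hx : 0 ≤ x)
    (h : d ≤ C * |√(x + 1) - √x|) : √(x + 1) * d ≤ |C| := by
  have hgap : 0 ≤ √(x + 1) - √x := sub_nonneg.2 (sqrt_le_sqrt (by linarith))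
  rw [abs_of_nonneg hgap] at h
  calc √(x + 1) * d ≤ √(x + 1) * (C * (√(x + 1) - √x)) := by gcongr
    _ ≤ √(x + 1) * (|C| * (√(x + 1) - √x)) := by gcongr; exact le_abs_self C
    _ = |C| * (√(x + 1) * (√(x + 1) - √x)) := by ring
    _ ≤ |C| * 1 := by gcongr; exact sqrt_add_one_mul_sub_sqrt_le_one hx
    _ = |C| := mul_one _

end Real

section

variable {E : Type*} [SeminormedAddCommGroup E]

theorem norm_sub_le_two_mul_mul_abs_sub_sqrt {σ : ℕ → E} {M : ℝ}
    (h : ∀ n : ℕ, √(n + 1) * ‖σ (n + 1) - σ n‖ ≤ M) (m n : ℕ) :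
    ‖σ m - σ n‖ ≤ 2 * M * |√m - √n| := by
  have hM : 0 ≤ M := (mul_nonneg (Real.sqrt_nonneg _) (norm_nonneg _)).trans (h 0)
  have hstep (k : ℕ) : dist (σ k) (σ (k + 1)) ≤ 2 * M * √(k + 1 : ℕ) - 2 * M * √k := by
    rw [dist_comm, dist_eq_norm, ← mul_sub, Nat.cast_succ]
    exact Real.le_two_mul_mul_sqrt_add_one_sub_sqrt k.cast_nonneg (norm_nonneg _) (h k)
  have := dist_le_abs_sub_of_dist_succ_le (f := fun k : ℕ => 2 * M * √k) hstep m n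
  rwa [dist_eq_norm, ← mul_sub, abs_mul, abs_of_nonneg (by positivity : 0 ≤ 2 * M)] at this

theorem sqrt_mul_norm_sub_le_abs_of_lipschitz {σ : ℕ → E} {C : ℝ}
    (h : ∀ m n : ℕ, ‖σ m - σ n‖ ≤ C * |√m - √n|) (n : ℕ) :
    √(n + 1) * ‖σ (n + 1) - σ n‖ ≤ |C| := by
  have := h (n + 1) n
  rw [Nat.cast_succ] at this
  exact Real.sqrt_add_one_mul_le_abs_of_le_mul_abs_sub_sqrt n.cast_nonneg this

end

theorem stmt_0 (σ : ℕ → ℂ) :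
    ((∃ C : ℝ, ∀ m n : ℕ, ‖σ m - σ n‖ ≤ C * |Real.sqrt m - Real.sqrt n|) ↔
      (∃ M : ℝ, ∀ n : ℕ, Real.sqrt (n + 1) * ‖σ (n + 1) - σ n‖ ≤ M)) ∧
    (∀ M : ℝ, (∀ n : ℕ, Real.sqrt (n + 1) * ‖σ (n + 1) - σ n‖ ≤ M) →
      ∀ m n : ℕ, ‖σ m - σ n‖ ≤ 2 * M * |Real.sqrt m - Real.sqrt n|) := by
  refine ⟨⟨fun ⟨C, hC⟩ => ⟨|C|, sqrt_mul_norm_sub_le_abs_of_lipschitz hC⟩,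
    fun ⟨M, hM⟩ => ⟨2 * M, norm_sub_le_two_mul_mul_abs_sub_sqrt hM⟩⟩,
    fun _ => norm_sub_le_two_mul_mul_abs_sub_sqrt⟩
end

section
/- Let σ : ℤ≥0 → ℂ and let f be its piecewise interpolation with respect to the parameter √x, i.e., f(x) = σ(n) + ((√x − √n)/(√(n+1) − √n))·(σ(n+1) − σ(n)) with n = ⌊x⌋. Then for every δ ∈ (0,1], the modulus of continuity of f with respect to the metric ρ(x,y) = |√x − √y| satisfies ω_{ρ,f}(δ) ≤ 3·max(ω_{ρ,σ}(√δ), √δ·ω_{ρ,σ}(1)). -/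
open scoped ENNReal NNReal

/-- Modulus of continuity of a function on `[0,∞)` with respect to `ρ(x,y)=|√x−√y|`. -/
noncomputable def omegaF (f : ℝ → ℂ) (δ : ℝ) : ℝ≥0∞ :=
  ⨆ (x : ℝ) (y : ℝ) (_ : 0 ≤ x) (_ : 0 ≤ y) (_ : |Real.sqrt x - Real.sqrt y| ≤ δ),
    (‖f x - f y‖₊ : ℝ≥0∞)

/-- Modulus of continuity of a sequence with respect to `ρ(m,n)=|√m−√n|`. -/
noncomputable def omegaS (σ : ℕ → ℂ) (δ : ℝ) : ℝ≥0∞ :=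
  ⨆ (m : ℕ) (n : ℕ) (_ : |Real.sqrt m - Real.sqrt n| ≤ δ), (‖σ m - σ n‖₊ : ℝ≥0∞)

/-! On the cell `[n, n+1]` the interpolant is affine in `√x` with slope
`(σ (n+1) - σ n) / (√(n+1) - √n)`, and cell lengths `√(n+1) - √n` are at most `1`. So an
increment over `ρ`-distance `≤ δ` inside a cell is at most `ω_σ(√δ)` when the cell has
`ρ`-length `≤ √δ`, and at most `(δ / √δ) · ω_σ(1)` otherwise. Points in different cells are
joined through the nearest nodes, giving two such increments plus one node difference at
`ρ`-distance `≤ δ ≤ √δ`. -/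

open Real Set

-- The affine piece on the cell `[n, n+1]`, as a function of `t = √x`.
noncomputable def sqrtSegment (σ : ℕ → ℂ) (n : ℕ) (t : ℝ) : ℂ :=
  σ n + (((t - √n) / (√(n + 1) - √n) : ℝ) : ℂ) * (σ (n + 1) - σ n)

noncomputable def sqrtInterp (σ : ℕ → ℂ) (x : ℝ) : ℂ :=
  sqrtSegment σ ⌊x⌋₊ √x

lemma sqrt_succ_sub_sqrt_pos (n : ℕ) : 0 < √(n + 1) - √n :=
  sub_pos.2 (sqrt_lt_sqrt n.cast_nonneg (lt_add_one _))

lemma sqrt_succ_sub_sqrt_le_one (n : ℕ) : √(n + 1) - √n ≤ 1 := by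
  rw [sub_le_iff_le_add', sqrt_le_left (by positivity)]
  nlinarith [sq_sqrt n.cast_nonneg, sqrt_nonneg n]

lemma sqrt_mem_Icc_sqrt_floor {x : ℝ} (hx : 0 ≤ x) : √x ∈ Icc √⌊x⌋₊ √(⌊x⌋₊ + 1) :=
  ⟨sqrt_le_sqrt (Nat.floor_le hx), sqrt_le_sqrt (Nat.lt_floor_add_one x).le⟩

lemma enorm_sub_le_omegaS (σ : ℕ → ℂ) {m n : ℕ} {δ : ℝ} (h : |√m - √n| ≤ δ) :
    ‖σ m - σ n‖ₑ ≤ omegaS σ δ :=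
  le_iSup_of_le m (le_iSup_of_le n (le_iSup_of_le h le_rfl))

lemma sqrtSegment_sqrt (σ : ℕ → ℂ) (n : ℕ) : sqrtSegment σ n √n = σ n := by
  simp [sqrtSegment]

lemma sqrtSegment_sqrt_succ (σ : ℕ → ℂ) (n : ℕ) : sqrtSegment σ n √(n + 1) = σ (n + 1) := by
  simp [sqrtSegment, div_self (sqrt_succ_sub_sqrt_pos n).ne']

lemma sqrtSegment_sub (σ : ℕ → ℂ) (n : ℕ) (t t' : ℝ) :
    sqrtSegment σ n t - sqrtSegment σ n t' =
      (((t - t') / (√(n + 1) - √n) : ℝ) : ℂ) * (σ (n + 1) - σ n) := by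
  simp only [sqrtSegment]
  push_cast
  ring

lemma enorm_mul_succ_sub_le (σ : ℕ → ℂ) (n : ℕ) {c δ : ℝ} (hc : |c| ≤ 1)
    (hcδ : |c| * (√(n + 1) - √n) ≤ δ) :
    ‖(c : ℂ) * (σ (n + 1) - σ n)‖ₑ ≤ max (omegaS σ √δ) (ENNReal.ofReal √δ * omegaS σ 1) := by
  have hs := sqrt_succ_sub_sqrt_pos n
  have hgap {r : ℝ} (hr : √(n + 1) - √n ≤ r) : ‖σ (n + 1) - σ n‖ₑ ≤ omegaS σ r :=
    enorm_sub_le_omegaS σ (by push_cast; rwa [abs_of_pos hs])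
  rw [enorm_mul, ← ofReal_norm, Complex.norm_real, Real.norm_eq_abs]
  rcases le_or_gt (√(n + 1) - √n) √δ with hsmall | hlarge
  · refine le_max_of_le_left ?_
    calc _ ≤ 1 * omegaS σ √δ := mul_le_mul' (ENNReal.ofReal_le_one.2 hc) (hgap hsmall)
      _ = _ := one_mul _
  · -- a gap larger than `√δ` forces `|c| ≤ δ / gap ≤ √δ`
    have hc' : |c| ≤ √δ := by
      have hδ : √δ * √δ = δ := mul_self_sqrt ((mul_nonneg (abs_nonneg c) hs.le).trans hcδ)
      nlinarith [sqrt_nonneg δ, abs_nonneg c]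
    exact le_max_of_le_right
      (mul_le_mul' (ENNReal.ofReal_le_ofReal hc') (hgap (sqrt_succ_sub_sqrt_le_one n)))

lemma enorm_sqrtSegment_sub_le (σ : ℕ → ℂ) (n : ℕ) {t t' δ : ℝ} (ht : t ∈ Icc √n √(n + 1))
    (ht' : t' ∈ Icc √n √(n + 1)) (htt' : |t - t'| ≤ δ) :
    ‖sqrtSegment σ n t - sqrtSegment σ n t'‖ₑ ≤
      max (omegaS σ √δ) (ENNReal.ofReal √δ * omegaS σ 1) := by
  have hs := sqrt_succ_sub_sqrt_pos n
  rw [sqrtSegment_sub]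
  apply enorm_mul_succ_sub_le σ n
  · rw [abs_div, abs_of_pos hs, div_le_one hs, abs_le]
    constructor <;> linarith [ht.1, ht.2, ht'.1, ht'.2]
  · rwa [abs_div, abs_of_pos hs, div_mul_cancel₀ _ hs.ne']

lemma enorm_sqrtInterp_sub_le_of_le (σ : ℕ → ℂ) {x y δ : ℝ} (hδ : δ ≤ 1) (hx : 0 ≤ x)
    (hxy : x ≤ y) (hδxy : √y - √x ≤ δ) :
    ‖sqrtInterp σ x - sqrtInterp σ y‖ₑ ≤
      3 * max (omegaS σ √δ) (ENNReal.ofReal √δ * omegaS σ 1) := by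
  set M := max (omegaS σ √δ) (ENNReal.ofReal √δ * omegaS σ 1)
  have hy := hx.trans hxy
  have hx' := sqrt_mem_Icc_sqrt_floor hx
  have hy' := sqrt_mem_Icc_sqrt_floor hy
  have hsqrt : √x ≤ √y := sqrt_le_sqrt hxy
  have hnm : ⌊x⌋₊ ≤ ⌊y⌋₊ := Nat.floor_mono hxy
  simp only [sqrtInterp]
  generalize ⌊x⌋₊ = n at *
  generalize ⌊y⌋₊ = m at *
  rcases hnm.eq_or_lt with rfl | hnm
  · refine (enorm_sqrtSegment_sub_le σ n hx' hy' ?_).trans (le_mul_of_one_le_left' (by norm_num))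
    rwa [abs_sub_comm, abs_of_nonneg (sub_nonneg.2 hsqrt)]
  · -- pass through the nodes `n + 1 ≤ m`, which are `ρ`-closer than `√y - √x ≤ δ ≤ √δ`
    have hnodes : √(n + 1) ≤ √m := sqrt_le_sqrt (by exact_mod_cast hnm)
    have hmid : ‖σ (n + 1) - σ m‖ₑ ≤ M := by
      refine (enorm_sub_le_omegaS σ ?_).trans (le_max_left _ _)
      push_cast
      rw [abs_sub_comm, abs_of_nonneg (sub_nonneg.2 hnodes)]
      linarith [hx'.2, hy'.1, le_sqrt_self_iff.2 hδ]
    calc ‖sqrtSegment σ n √x - sqrtSegment σ m √y‖ₑ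
        = ‖(sqrtSegment σ n √x - sqrtSegment σ n √(n + 1)) + (σ (n + 1) - σ m) +
            (sqrtSegment σ m √m - sqrtSegment σ m √y)‖ₑ := by
          rw [sqrtSegment_sqrt_succ, sqrtSegment_sqrt]
          congr 1; ring
      _ ≤ M + M + M := by
          refine enorm_add₃_le.trans (add_le_add_three ?_ hmid ?_)
          · refine enorm_sqrtSegment_sub_le σ n hx' (right_mem_Icc.2 (sqrt_le_sqrt (by linarith))) ?_
            rw [abs_sub_comm, abs_of_nonneg (by linarith [hx'.2])]
            linarith [hy'.1]
          · refine enorm_sqrtSegment_sub_le σ m (left_mem_Icc.2 (sqrt_le_sqrt (by linarith))) hy' ?_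
            rw [abs_sub_comm, abs_of_nonneg (by linarith [hy'.1])]
            linarith [hx'.2]
      _ = 3 * M := by ring

lemma enorm_sqrtInterp_sub_le (σ : ℕ → ℂ) {x y δ : ℝ} (hδ : δ ≤ 1) (hx : 0 ≤ x) (hy : 0 ≤ y)
    (hxy : |√x - √y| ≤ δ) :
    ‖sqrtInterp σ x - sqrtInterp σ y‖ₑ ≤
      3 * max (omegaS σ √δ) (ENNReal.ofReal √δ * omegaS σ 1) := by
  wlog h : x ≤ y generalizing x y
  · rw [enorm_sub_rev]
    exact this hy hx (by rwa [abs_sub_comm]) (le_of_not_ge h)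
  exact enorm_sqrtInterp_sub_le_of_le σ hδ hx h ((le_abs_self _).trans (by rwa [abs_sub_comm]))

theorem stmt_4 (σ : ℕ → ℂ) (f : ℝ → ℂ)
    (hf : ∀ x : ℝ, 0 ≤ x →
      f x = σ ⌊x⌋₊ +
        (((Real.sqrt x - Real.sqrt ⌊x⌋₊) /
          (Real.sqrt (⌊x⌋₊ + 1) - Real.sqrt ⌊x⌋₊) : ℝ) : ℂ) * (σ (⌊x⌋₊ + 1) - σ ⌊x⌋₊))
    (δ : ℝ) (hδ : δ ∈ Set.Ioc (0 : ℝ) 1) :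
    omegaF f δ ≤
      3 * max (omegaS σ (Real.sqrt δ)) (ENNReal.ofReal (Real.sqrt δ) * omegaS σ 1) := by
  refine iSup_le fun x => iSup_le fun y => iSup_le fun hx => iSup_le fun hy =>
    iSup_le fun hxy => ?_
  have hf' : ∀ z, 0 ≤ z → f z = sqrtInterp σ z := hf
  rw [hf' x hx, hf' y hy]
  exact enorm_sqrtInterp_sub_le σ hδ.2 hx hy hxy
end

section
/- Every bounded sequence σ : ℤ≥0 → ℂ that is uniformly continuous with respect to the metric ρ(m,n) = |√m − √n| extends to a bounded function f : [0,∞) → ℂ that is uniformly continuous with respect to the metric ρ(x,y) = |√x − √y| and satisfies f(n) = σ(n) for every n ∈ ℤ≥0 and sup|f| = sup|σ|. -/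
/-!
Interpolate `σ` linearly between consecutive integers. The value at `x` is a convex combination
of `σ ⌊x⌋` and `σ (⌊x⌋ + 1)`, which gives the bound and the equality of suprema. For uniform
continuity in `ρ`: where `√x` stays bounded, `ρ`-closeness forces ordinary closeness, and the
interpolant is Lipschitz with constant `sup ‖σ (n + 1) - σ n‖`; far out, the gaps
`√(n + 1) - √n ≤ 1 / √n` are small, so each point is `ρ`-close to its floor and the interpolant
is close to `σ` there, which reduces the claim to the uniform continuity of `σ`.
-/

open scoped ENNReal NNReal

open Set

lemma sqrt_sub_sqrt_le_of_le_add_one {η a b : ℝ} (hη : 0 < η) (ha : η⁻¹ ^ 2 ≤ a) (hab : a ≤ b)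
    (hb : b ≤ a + 1) : √b - √a ≤ η := by
  have hηa : η⁻¹ ≤ √a := Real.le_sqrt_of_sq_le ha
  have hab' : √a ≤ √b := Real.sqrt_le_sqrt hab
  have hprod : (√b - √a) * (√b + √a) ≤ 1 := by
    nlinarith [Real.sq_sqrt ((sq_nonneg η⁻¹).trans ha),
      Real.sq_sqrt ((sq_nonneg η⁻¹).trans (ha.trans hab))]
  have : (√b - √a) * η⁻¹ ≤ 1 := by nlinarith
  rwa [← div_eq_mul_inv, div_le_one hη] at this

section

variable {E : Type*} [NormedAddCommGroup E] [NormedSpace ℝ E]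

noncomputable def natLinearInterp (σ : ℕ → E) (x : ℝ) : E :=
  AffineMap.lineMap (σ ⌊x⌋₊) (σ (⌊x⌋₊ + 1)) (x - ⌊x⌋₊)

variable (σ : ℕ → E)

@[simp]
lemma natLinearInterp_natCast (n : ℕ) : natLinearInterp σ n = σ n := by
  simp [natLinearInterp]

lemma natLinearInterp_eq_lineMap {m : ℕ} {x : ℝ} (hx : x ∈ Icc (m : ℝ) (m + 1)) :
    natLinearInterp σ x = AffineMap.lineMap (σ m) (σ (m + 1)) (x - m) := by
  rcases hx.2.lt_or_eq with hlt | rfl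
  · rw [natLinearInterp, (Nat.floor_eq_iff (by linarith [hx.1])).2 ⟨hx.1, hlt⟩]
  · simpa using natLinearInterp_natCast σ (m + 1)

lemma norm_natLinearInterp_le {x : ℝ} (hx : 0 ≤ x) :
    ‖natLinearInterp σ x‖ ≤ max ‖σ ⌊x⌋₊‖ ‖σ (⌊x⌋₊ + 1)‖ :=
  convexOn_univ_norm.le_max_of_mem_segment trivial trivial <| lineMap_mem_segment ℝ _ _
    ⟨sub_nonneg.2 (Nat.floor_le hx), by linarith [Nat.lt_floor_add_one x]⟩

lemma dist_natLinearInterp_floor_le {x : ℝ} (hx : 0 ≤ x) :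
    dist (natLinearInterp σ x) (σ ⌊x⌋₊) ≤ dist (σ ⌊x⌋₊) (σ (⌊x⌋₊ + 1)) := by
  rw [natLinearInterp, dist_lineMap_left, Real.norm_eq_abs,
    abs_of_nonneg (sub_nonneg.2 (Nat.floor_le hx))]
  exact mul_le_of_le_one_left dist_nonneg (by linarith [Nat.lt_floor_add_one x])

lemma iSup_nnnorm_natLinearInterp :
    (⨆ x : ℝ, ⨆ _ : 0 ≤ x, (‖natLinearInterp σ x‖₊ : ℝ≥0∞)) = ⨆ n : ℕ, (‖σ n‖₊ : ℝ≥0∞) := by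
  refine le_antisymm (iSup₂_le fun x hx => ?_) (iSup_le fun n => ?_)
  · have le_iSup_of_norm_le {k : ℕ} (h : ‖natLinearInterp σ x‖ ≤ ‖σ k‖) :
        (‖natLinearInterp σ x‖₊ : ℝ≥0∞) ≤ ⨆ n : ℕ, (‖σ n‖₊ : ℝ≥0∞) :=
      le_iSup_of_le k (by exact_mod_cast h)
    rcases le_max_iff.1 (norm_natLinearInterp_le σ hx) with h | h
    exacts [le_iSup_of_norm_le h, le_iSup_of_norm_le h]
  · exact le_iSup₂_of_le (n : ℝ) n.cast_nonneg (by rw [natLinearInterp_natCast])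

variable {σ} {L : ℝ}

lemma dist_natLinearInterp_le_of_mem_Icc (hL : ∀ n, dist (σ n) (σ (n + 1)) ≤ L) {m : ℕ}
    {x y : ℝ} (hx : x ∈ Icc (m : ℝ) (m + 1)) (hy : y ∈ Icc (m : ℝ) (m + 1)) :
    dist (natLinearInterp σ x) (natLinearInterp σ y) ≤ L * |x - y| := by
  rw [natLinearInterp_eq_lineMap σ hx, natLinearInterp_eq_lineMap σ hy, dist_lineMap_lineMap,
    Real.dist_eq, sub_sub_sub_cancel_right, mul_comm]
  exact mul_le_mul_of_nonneg_right (hL m) (abs_nonneg _)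

lemma dist_natLinearInterp_le_of_le_add_one (hL : ∀ n, dist (σ n) (σ (n + 1)) ≤ L) {x y : ℝ}
    (hx : 0 ≤ x) (hxy : x ≤ y) (hy : y ≤ x + 1) :
    dist (natLinearInterp σ x) (natLinearInterp σ y) ≤ L * (y - x) := by
  set m := ⌊x⌋₊
  have hxm : x ∈ Icc (m : ℝ) (m + 1) := ⟨Nat.floor_le hx, (Nat.lt_floor_add_one x).le⟩
  rcases le_total y (m + 1) with hym | hym
  · simpa [abs_of_nonpos (sub_nonpos.2 hxy)] using
      dist_natLinearInterp_le_of_mem_Icc hL hxm ⟨hxm.1.trans hxy, hym⟩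
  · have hy2 : y ≤ ((m + 1 : ℕ) : ℝ) + 1 := by push_cast; linarith [Nat.lt_floor_add_one x]
    have h₁ := dist_natLinearInterp_le_of_mem_Icc hL hxm ⟨by linarith [hxm.1], le_rfl⟩
    have h₂ := dist_natLinearInterp_le_of_mem_Icc hL (m := m + 1) (x := m + 1)
      ⟨by push_cast; rfl, by push_cast; linarith⟩ ⟨by push_cast; exact hym, hy2⟩
    calc dist (natLinearInterp σ x) (natLinearInterp σ y)
        ≤ L * |x - (m + 1)| + L * |(m + 1) - y| := (dist_triangle _ _ _).trans (add_le_add h₁ h₂)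
      _ = L * (y - x) := by
        rw [abs_of_nonpos (by linarith [hxm.2]), abs_of_nonpos (by linarith)]; ring

lemma exists_dist_natLinearInterp_le_of_sqrt_le (hL : ∀ n, dist (σ n) (σ (n + 1)) ≤ L)
    (S : ℝ) {ε : ℝ} (hε : 0 < ε) :
    ∃ δ > 0, ∀ x y : ℝ, 0 ≤ x → x ≤ y → √y ≤ S → √y - √x ≤ δ →
      dist (natLinearInterp σ x) (natLinearInterp σ y) ≤ ε := by
  have hL0 : 0 ≤ L := dist_nonneg.trans (hL 0)
  obtain ⟨c, hc, hLc⟩ := exists_pos_mul_lt hε L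
  obtain ⟨δ, hδ, hSδ⟩ := exists_pos_mul_lt (lt_min one_pos hc) (2 * S)
  refine ⟨δ, hδ, fun x y hx hxy hyS hδxy => ?_⟩
  have hsx : √x ≤ √y := Real.sqrt_le_sqrt hxy
  -- `y - x = (√y - √x) (√y + √x)`
  have hyx : y - x ≤ 2 * S * δ := by
    nlinarith [Real.sq_sqrt hx, Real.sq_sqrt (hx.trans hxy), Real.sqrt_nonneg x]
  have hyx' : y - x ≤ min 1 c := by linarith
  calc dist (natLinearInterp σ x) (natLinearInterp σ y) ≤ L * (y - x) :=
        dist_natLinearInterp_le_of_le_add_one hL hx hxy (by linarith [min_le_left 1 c])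
    _ ≤ L * c := mul_le_mul_of_nonneg_left (hyx'.trans (min_le_right _ _)) hL0
    _ ≤ ε := hLc.le

lemma exists_dist_natLinearInterp_le_of_ge
    (hσ : ∀ ε > 0, ∃ δ > 0, ∀ m n : ℕ, |√m - √n| ≤ δ → dist (σ m) (σ n) ≤ ε)
    {ε : ℝ} (hε : 0 < ε) :
    ∃ δ > 0, ∃ T : ℝ, ∀ x y : ℝ, T ≤ x → x ≤ y → √y - √x ≤ δ →
      dist (natLinearInterp σ x) (natLinearInterp σ y) ≤ ε := by
  obtain ⟨δ₀, hδ₀, hσδ₀⟩ := hσ (ε / 3) (by positivity)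
  set η := δ₀ / 3 with hη_def
  have hη : 0 < η := by positivity
  have near_floor : ∀ z, η⁻¹ ^ 2 + 1 ≤ z →
      √z - √⌊z⌋₊ ≤ η ∧ dist (natLinearInterp σ z) (σ ⌊z⌋₊) ≤ ε / 3 := by
    intro z hz
    have hz0 : 0 ≤ z := by linarith [sq_nonneg η⁻¹]
    have hfloor : η⁻¹ ^ 2 ≤ ⌊z⌋₊ := by linarith [Nat.sub_one_lt_floor z]
    refine ⟨sqrt_sub_sqrt_le_of_le_add_one hη hfloor (Nat.floor_le hz0)
      (Nat.lt_floor_add_one z).le, (dist_natLinearInterp_floor_le σ hz0).trans (hσδ₀ _ _ ?_)⟩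
    have := sqrt_sub_sqrt_le_of_le_add_one hη hfloor (le_add_of_nonneg_right zero_le_one) le_rfl
    have := Real.sqrt_le_sqrt (le_add_of_nonneg_right zero_le_one : (⌊z⌋₊ : ℝ) ≤ ⌊z⌋₊ + 1)
    rw [abs_sub_comm, abs_of_nonneg (by push_cast; linarith)]
    push_cast
    linarith [hη_def]
  refine ⟨η, hη, η⁻¹ ^ 2 + 1, fun x y hx hxy hδxy => ?_⟩
  obtain ⟨hx₁, hx₂⟩ := near_floor x hx
  obtain ⟨hy₁, hy₂⟩ := near_floor y (hx.trans hxy)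
  have hx0 : 0 ≤ x := by linarith [sq_nonneg η⁻¹]
  have hxx := Real.sqrt_le_sqrt (Nat.floor_le hx0)
  have hyy := Real.sqrt_le_sqrt (Nat.floor_le (hx0.trans hxy))
  have hxy' := Real.sqrt_le_sqrt hxy
  have hmid : dist (σ ⌊x⌋₊) (σ ⌊y⌋₊) ≤ ε / 3 :=
    hσδ₀ _ _ (abs_le.2 ⟨by linarith [hη_def], by linarith [hη_def]⟩)
  calc dist (natLinearInterp σ x) (natLinearInterp σ y)
      ≤ dist (natLinearInterp σ x) (σ ⌊x⌋₊) + dist (σ ⌊x⌋₊) (σ ⌊y⌋₊)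
        + dist (σ ⌊y⌋₊) (natLinearInterp σ y) := dist_triangle4 _ _ _ _
    _ ≤ ε / 3 + ε / 3 + ε / 3 := by rw [dist_comm (σ ⌊y⌋₊)]; gcongr
    _ = ε := by ring

theorem natLinearInterp_uniformContinuous_sqrt (hL : ∀ n, dist (σ n) (σ (n + 1)) ≤ L)
    (hσ : ∀ ε > 0, ∃ δ > 0, ∀ m n : ℕ, |√m - √n| ≤ δ → dist (σ m) (σ n) ≤ ε) :
    ∀ ε > 0, ∃ δ > 0, ∀ x y : ℝ, 0 ≤ x → 0 ≤ y → |√x - √y| ≤ δ →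
      dist (natLinearInterp σ x) (natLinearInterp σ y) ≤ ε := by
  intro ε hε
  obtain ⟨δ₁, hδ₁, T, hfar⟩ := exists_dist_natLinearInterp_le_of_ge hσ hε
  obtain ⟨δ₂, hδ₂, hnear⟩ := exists_dist_natLinearInterp_le_of_sqrt_le hL (√T + 1) hε
  set δ := min 1 (min δ₁ δ₂)
  have of_le : ∀ x y, 0 ≤ x → x ≤ y → √y - √x ≤ δ →
      dist (natLinearInterp σ x) (natLinearInterp σ y) ≤ ε := by
    intro x y hx hxy h
    rcases le_total T x with hTx | hxT
    · exact hfar x y hTx hxy (h.trans ((min_le_right _ _).trans (min_le_left _ _)))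
    · exact hnear x y hx hxy (by linarith [Real.sqrt_le_sqrt hxT, min_le_left 1 (min δ₁ δ₂)])
        (h.trans ((min_le_right _ _).trans (min_le_right _ _)))
  refine ⟨δ, by positivity, fun x y hx hy h => ?_⟩
  rcases le_total x y with hxy | hyx
  · exact of_le x y hx hxy ((le_abs_self _).trans (abs_sub_comm (√x) (√y) ▸ h))
  · exact dist_comm (natLinearInterp σ x) _ ▸ of_le y x hy hyx ((le_abs_self _).trans h)

end

theorem stmt_5 (σ : ℕ → ℂ)
    (hb : ∃ C : ℝ, ∀ n : ℕ, ‖σ n‖ ≤ C)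
    (huc : ∀ ε > (0 : ℝ), ∃ δ > (0 : ℝ), ∀ m n : ℕ,
      |Real.sqrt m - Real.sqrt n| ≤ δ → ‖σ m - σ n‖ ≤ ε) :
    ∃ f : ℝ → ℂ,
      (∀ n : ℕ, f n = σ n) ∧
      (∃ C : ℝ, ∀ x : ℝ, 0 ≤ x → ‖f x‖ ≤ C) ∧
      (∀ ε > (0 : ℝ), ∃ δ > (0 : ℝ), ∀ x y : ℝ, 0 ≤ x → 0 ≤ y →
        |Real.sqrt x - Real.sqrt y| ≤ δ → ‖f x - f y‖ ≤ ε) ∧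
      (⨆ x : ℝ, ⨆ _ : 0 ≤ x, (‖f x‖₊ : ℝ≥0∞)) = ⨆ n : ℕ, (‖σ n‖₊ : ℝ≥0∞) := by
  obtain ⟨C, hC⟩ := hb
  have hL : ∀ n, dist (σ n) (σ (n + 1)) ≤ C + C := fun n =>
    (dist_le_norm_add_norm _ _).trans (add_le_add (hC n) (hC (n + 1)))
  refine ⟨natLinearInterp σ, natLinearInterp_natCast σ,
    ⟨C, fun x hx => (norm_natLinearInterp_le σ hx).trans (max_le (hC _) (hC _))⟩, ?_,
    iSup_nnnorm_natLinearInterp σ⟩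
  simpa only [dist_eq_norm] using
    natLinearInterp_uniformContinuous_sqrt hL (by simpa only [dist_eq_norm] using huc)
end

section
/- For every n ∈ ℕ, the L¹ distance between consecutive Gamma-density kernels equals ∫_0^∞ |r^{n-1}e^{-r}/(n−1)! − r^n e^{-r}/n!| dr = 2·n^n·e^{-n}/n!. -/
/-!
The difference `K(n-1, r) - K(n, r)` is the derivative of `K(n, ·)`, and it equals
`K(n, r) (n - r) / r`, so it is nonnegative on `(0, n]` and nonpositive on `(n, ∞)`.
Integrating the derivative over both pieces, with `K(n, 0) = 0` and `K(n, r) → 0` as `r → ∞`,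
gives twice the maximum value `K(n, n)`.
-/

open MeasureTheory Set Real Filter Topology

theorem integral_Ioi_abs_eq_of_hasDerivAt {F f : ℝ → ℝ} {a c : ℝ} (hac : a ≤ c)
    (hderiv : ∀ x ∈ Ici a, HasDerivAt F (f x) x) (hint : IntegrableOn f (Ioi a))
    (hnonneg : ∀ x ∈ Ioc a c, 0 ≤ f x) (hnonpos : ∀ x ∈ Ioi c, f x ≤ 0)
    (hlim : Tendsto F atTop (𝓝 0)) :
    ∫ x in Ioi a, |f x| = 2 * F c - F a := by
  have hint_left : IntegrableOn f (Ioc a c) := hint.mono_set Ioc_subset_Ioi_self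
  have hint_right : IntegrableOn f (Ioi c) := hint.mono_set (Ioi_subset_Ioi hac)
  have h_left : ∫ x in Ioc a c, |f x| = F c - F a := by
    rw [setIntegral_congr_fun measurableSet_Ioc fun x hx => abs_of_nonneg (hnonneg x hx),
      ← intervalIntegral.integral_of_le hac]
    refine intervalIntegral.integral_eq_sub_of_hasDerivAt (fun x hx => hderiv x ?_)
      ((intervalIntegrable_iff_integrableOn_Ioc_of_le hac).2 hint_left)
    rw [uIcc_of_le hac] at hx
    exact hx.1
  have h_right : ∫ x in Ioi c, |f x| = F c := by
    rw [setIntegral_congr_fun measurableSet_Ioi fun x hx => abs_of_nonpos (hnonpos x hx),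
      integral_neg, integral_Ioi_of_hasDerivAt_of_tendsto'
        (fun x hx => hderiv x (Ici_subset_Ici.2 hac hx)) hint_right hlim]
    ring
  rw [← Ioc_union_Ioi_eq_Ioi hac, setIntegral_union (Ioc_disjoint_Ioi le_rfl) measurableSet_Ioi
    hint_left.abs hint_right.abs, h_left, h_right]
  ring

noncomputable def gammaKernel (n : ℕ) (r : ℝ) : ℝ :=
  r ^ n * exp (-r) / n.factorial

theorem gammaKernel_succ_zero (n : ℕ) : gammaKernel (n + 1) 0 = 0 := by
  simp [gammaKernel]

theorem gammaKernel_sub_gammaKernel_succ (n : ℕ) (r : ℝ) :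
    gammaKernel n r - gammaKernel (n + 1) r =
      r ^ n * exp (-r) * ((n + 1) - r) / (n + 1).factorial := by
  simp only [gammaKernel, Nat.factorial_succ, Nat.cast_mul, Nat.cast_succ]
  field_simp
  ring

theorem hasDerivAt_gammaKernel_succ (n : ℕ) (r : ℝ) :
    HasDerivAt (gammaKernel (n + 1)) (gammaKernel n r - gammaKernel (n + 1) r) r := by
  have h : HasDerivAt (fun x => x ^ (n + 1) * exp (-x) / (n + 1).factorial)
      (((n + 1 : ℕ) * r ^ n * exp (-r) + r ^ (n + 1) * (exp (-r) * -1)) / (n + 1).factorial) r :=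
    ((hasDerivAt_pow (n + 1) r).mul (hasDerivAt_neg r).exp).div_const _
  refine h.congr_deriv ?_
  rw [gammaKernel_sub_gammaKernel_succ]
  push_cast
  ring

theorem integrableOn_gammaKernel (n : ℕ) : IntegrableOn (gammaKernel n) (Ioi 0) := by
  have h : IntegrableOn (fun x => exp (-x) * x ^ ((n : ℝ) + 1 - 1) / n.factorial) (Ioi 0) :=
    (GammaIntegral_convergent (by positivity)).div_const _
  simp only [add_sub_cancel_right, rpow_natCast] at h
  exact h.congr_fun (fun r _ => by simp only [gammaKernel]; ring) measurableSet_Ioi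

theorem tendsto_gammaKernel_atTop (n : ℕ) : Tendsto (gammaKernel n) atTop (𝓝 0) := by
  have h := (tendsto_pow_mul_exp_neg_atTop_nhds_zero n).div_const (n.factorial : ℝ)
  rwa [zero_div] at h

theorem integral_Ioi_abs_gammaKernel_sub_gammaKernel_succ (n : ℕ) :
    ∫ r in Ioi (0 : ℝ), |gammaKernel n r - gammaKernel (n + 1) r| =
      2 * gammaKernel (n + 1) (n + 1) := by
  have h := integral_Ioi_abs_eq_of_hasDerivAt (a := 0) (c := (n : ℝ) + 1) (by positivity)
    (fun r _ => hasDerivAt_gammaKernel_succ n r)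
    ((integrableOn_gammaKernel n).sub (integrableOn_gammaKernel (n + 1)))
    (fun r hr => by
      have : 0 ≤ r := hr.1.le
      rw [gammaKernel_sub_gammaKernel_succ]
      exact div_nonneg (mul_nonneg (by positivity) (sub_nonneg.2 hr.2)) (by positivity))
    (fun r hr => by
      have : 0 ≤ r := (show (0 : ℝ) ≤ n + 1 by positivity).trans (le_of_lt hr)
      rw [gammaKernel_sub_gammaKernel_succ]
      exact div_nonpos_of_nonpos_of_nonneg
        (mul_nonpos_of_nonneg_of_nonpos (by positivity) (sub_nonpos.2 (le_of_lt hr)))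
        (by positivity))
    (tendsto_gammaKernel_atTop (n + 1))
  rwa [gammaKernel_succ_zero, sub_zero] at h

theorem stmt_6 (n : ℕ) (hn : 0 < n) :
    ∫ r in Set.Ioi (0 : ℝ),
        |r ^ (n - 1) * Real.exp (-r) / (Nat.factorial (n - 1)) -
          r ^ n * Real.exp (-r) / (Nat.factorial n)| =
      2 * (n : ℝ) ^ n * Real.exp (-n) / (Nat.factorial n) := by
  obtain ⟨m, rfl⟩ := Nat.exists_eq_add_one_of_ne_zero hn.ne'
  have h := integral_Ioi_abs_gammaKernel_sub_gammaKernel_succ m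
  simp only [gammaKernel] at h
  push_cast
  rw [h]
  ring
end

section
/- For every bounded measurable function a : [0,∞) → ℂ with ‖a‖_∞ ≤ 1, and every n ∈ ℕ, the eigenvalue sequence γ_a(n) = (1/n!)·∫_0^∞ a(√r)·e^{-r}·r^n dr satisfies |γ_a(n) − γ_a(n−1)| ≤ ∫_0^∞ |r^n e^{-r}/n! − r^{n-1}e^{-r}/(n−1)!| dr = 2 n^n e^{-n}/n! ≤ √(2/(πn)). -/
/-!
Write `K k r = r^k e^{-r} / k!` (`poissonWeight k r`), so that `γ(n) - γ(n-1)` is the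
integral of `a(√r)` against `K n - K (n-1)`, and `‖a‖ ≤ 1` bounds it by `∫ |K n - K (n-1)|`.
Since `∂ᵣ K n = K (n-1) - K n`, this is the total variation of `K n` on `(0, ∞)`; `K n`
vanishes at `0` and `∞` and increases up to its maximum at `r = n`, so the total variation is
`2 K n n = 2 n^n e^{-n} / n!`. Stirling's lower bound `n! ≥ √(2πn) (n/e)^n` gives the last
inequality.
-/

open MeasureTheory Set Real Filter Topology
open scoped Nat

theorem integral_Ioi_abs_deriv_eq_two_mul {F F' : ℝ → ℝ} {c : ℝ} (hc : 0 ≤ c)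
    (hF : ∀ x, HasDerivAt F (F' x) x) (hF' : IntegrableOn F' (Ioi 0))
    (hF0 : F 0 = 0) (hFtop : Tendsto F atTop (𝓝 0))
    (hrise : ∀ x ∈ Ioc 0 c, 0 ≤ F' x) (hfall : ∀ x ∈ Ioi c, F' x ≤ 0) :
    ∫ x in Ioi 0, |F' x| = 2 * F c := by
  have hsplit : Ioc 0 c ∪ Ioi c = Ioi (0 : ℝ) := Ioc_union_Ioi_eq_Ioi hc
  have hF'_Ioc : IntegrableOn F' (Ioc 0 c) := hF'.mono_set (hsplit ▸ subset_union_left)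
  have hF'_Ioi : IntegrableOn F' (Ioi c) := hF'.mono_set (hsplit ▸ subset_union_right)
  have hup : ∫ x in Ioc 0 c, |F' x| = F c := by
    rw [setIntegral_congr_fun measurableSet_Ioc (fun x hx => abs_of_nonneg (hrise x hx)),
      ← intervalIntegral.integral_of_le hc,
      intervalIntegral.integral_eq_sub_of_hasDerivAt (fun x _ => hF x)
        ((intervalIntegrable_iff_integrableOn_Ioc_of_le hc).2 hF'_Ioc), hF0, sub_zero]
  have hdown : ∫ x in Ioi c, |F' x| = F c := by
    rw [setIntegral_congr_fun measurableSet_Ioi (fun x hx => abs_of_nonpos (hfall x hx)),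
      integral_neg, integral_Ioi_of_hasDerivAt_of_tendsto
        (hF c).continuousAt.continuousWithinAt (fun x _ => hF x) hF'_Ioi hFtop]
    ring
  rw [← hsplit, setIntegral_union (Ioc_disjoint_Ioi le_rfl) measurableSet_Ioi
    hF'_Ioc.abs hF'_Ioi.abs, hup, hdown]
  ring

theorem norm_setIntegral_mul_ofReal_le {α : Type*} [MeasurableSpace α] {μ : Measure α}
    {s : Set α} (hs : MeasurableSet s) {g : α → ℂ} {f : α → ℝ} (hf : IntegrableOn f s μ)
    (hg : ∀ x ∈ s, ‖g x‖ ≤ 1) :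
    ‖∫ x in s, g x * f x ∂μ‖ ≤ ∫ x in s, |f x| ∂μ := by
  refine norm_integral_le_of_norm_le hf.abs ((ae_restrict_iff' hs).2 (ae_of_all _ fun x hx => ?_))
  rw [norm_mul, Complex.norm_real, norm_eq_abs]
  exact mul_le_of_le_one_left (abs_nonneg _) (hg x hx)

noncomputable def poissonWeight (k : ℕ) (r : ℝ) : ℝ := r ^ k * exp (-r) / k !

theorem integrableOn_pow_mul_exp_neg (k : ℕ) :
    IntegrableOn (fun r : ℝ => r ^ k * exp (-r)) (Ioi 0) := by
  refine (GammaIntegral_convergent (s := k + 1) (by positivity)).congr_fun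
    (fun r _ => ?_) measurableSet_Ioi
  dsimp only
  rw [add_sub_cancel_right, rpow_natCast, mul_comm]

theorem integrableOn_poissonWeight (k : ℕ) : IntegrableOn (poissonWeight k) (Ioi 0) :=
  (integrableOn_pow_mul_exp_neg k).div_const _

theorem integrableOn_mul_poissonWeight {g : ℝ → ℂ}
    (hg : AEStronglyMeasurable g (volume.restrict (Ioi 0))) {C : ℝ} (hC : ∀ r, ‖g r‖ ≤ C)
    (k : ℕ) : IntegrableOn (fun r => g r * poissonWeight k r) (Ioi 0) :=
  (integrableOn_poissonWeight k).ofReal.bdd_mul hg (ae_of_all _ hC)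

theorem poissonWeight_nonneg (k : ℕ) {r : ℝ} (hr : 0 ≤ r) : 0 ≤ poissonWeight k r := by
  unfold poissonWeight; positivity

theorem poissonWeight_sub_poissonWeight_succ (m : ℕ) (r : ℝ) :
    poissonWeight m r - poissonWeight (m + 1) r =
      (1 - r / (m + 1 : ℕ)) * poissonWeight m r := by
  simp only [poissonWeight, Nat.factorial_succ]
  push_cast
  field_simp
  ring

theorem hasDerivAt_poissonWeight_succ (m : ℕ) (r : ℝ) :
    HasDerivAt (poissonWeight (m + 1)) (poissonWeight m r - poissonWeight (m + 1) r) r := by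
  have hexp : HasDerivAt (fun r : ℝ => exp (-r)) (-exp (-r)) r := by
    simpa using (hasDerivAt_neg r).exp
  refine (((hasDerivAt_pow (m + 1) r).mul hexp).div_const _).congr_deriv ?_
  simp only [poissonWeight, Nat.factorial_succ]
  push_cast
  field_simp
  ring

theorem integral_abs_poissonWeight_succ_sub (m : ℕ) :
    ∫ r in Ioi 0, |poissonWeight (m + 1) r - poissonWeight m r| =
      2 * poissonWeight (m + 1) (m + 1 : ℕ) := by
  have hm : (0 : ℝ) < (m + 1 : ℕ) := by positivity
  simp_rw [abs_sub_comm (poissonWeight (m + 1) _)]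
  refine integral_Ioi_abs_deriv_eq_two_mul hm.le (hasDerivAt_poissonWeight_succ m)
    ((integrableOn_poissonWeight m).sub (integrableOn_poissonWeight (m + 1)))
    (by simp [poissonWeight]) ?_ (fun r hr => ?_) (fun r hr => ?_)
  · unfold poissonWeight
    simpa only [zero_div] using
      (tendsto_pow_mul_exp_neg_atTop_nhds_zero (m + 1)).div_const ((m + 1)! : ℝ)
  · rw [poissonWeight_sub_poissonWeight_succ]
    have : r / (m + 1 : ℕ) ≤ 1 := (div_le_one hm).2 hr.2
    exact mul_nonneg (by linarith) (poissonWeight_nonneg m hr.1.le)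
  · rw [poissonWeight_sub_poissonWeight_succ]
    have : 1 ≤ r / (m + 1 : ℕ) := (one_le_div hm).2 (le_of_lt hr)
    exact mul_nonpos_of_nonpos_of_nonneg (by linarith)
      (poissonWeight_nonneg m (hm.le.trans (le_of_lt hr)))

theorem two_mul_poissonWeight_self_le {n : ℕ} (hn : n ≠ 0) :
    2 * poissonWeight n n ≤ √(2 / (π * n)) := by
  have hn' : (0 : ℝ) < n := by positivity
  have hroot : √(2 / (π * n)) = 2 / √(2 * π * n) := by
    rw [eq_div_iff (by positivity), ← sqrt_mul (by positivity),
      show 2 / (π * n) * (2 * π * n) = 2 ^ 2 by field_simp, sqrt_sq zero_le_two]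
  have hweight : poissonWeight n n = (n / exp 1) ^ n / n ! := by
    rw [poissonWeight, div_pow, ← exp_nat_mul, mul_one, exp_neg, ← div_eq_mul_inv]
  rw [hroot, hweight, ← mul_div_assoc, div_le_div_iff₀ (by positivity) (by positivity)]
  linarith [Stirling.le_factorial_stirling n]

theorem stmt_10 (a : ℝ → ℂ) (hm : Measurable a)
    (ha : ∀ r : ℝ, 0 ≤ r → ‖a r‖ ≤ 1) (n : ℕ) (hn : 0 < n)
    (γ : ℕ → ℂ)
    (hγ : ∀ k : ℕ, γ k = (Nat.factorial k : ℂ)⁻¹ *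
      ∫ r in Set.Ioi (0 : ℝ), a (Real.sqrt r) * ((Real.exp (-r) * r ^ k : ℝ) : ℂ)) :
    ‖γ n - γ (n - 1)‖ ≤
      (∫ r in Set.Ioi (0 : ℝ),
        |r ^ n * Real.exp (-r) / (Nat.factorial n) -
          r ^ (n - 1) * Real.exp (-r) / (Nat.factorial (n - 1))|) ∧
    (∫ r in Set.Ioi (0 : ℝ),
        |r ^ n * Real.exp (-r) / (Nat.factorial n) -
          r ^ (n - 1) * Real.exp (-r) / (Nat.factorial (n - 1))|) =
      2 * (n : ℝ) ^ n * Real.exp (-n) / (Nat.factorial n) ∧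
    2 * (n : ℝ) ^ n * Real.exp (-n) / (Nat.factorial n) ≤ Real.sqrt (2 / (Real.pi * n)) := by
  have hK : 2 * (n : ℝ) ^ n * exp (-n) / n ! = 2 * poissonWeight n n := by
    rw [poissonWeight]; ring
  obtain ⟨m, rfl⟩ : ∃ m, n = m + 1 := ⟨n - 1, (Nat.succ_pred_eq_of_pos hn).symm⟩
  rw [hK, Nat.add_sub_cancel]
  set g : ℝ → ℂ := fun r => a √r
  have hg : AEStronglyMeasurable g (volume.restrict (Ioi 0)) :=
    (hm.comp continuous_sqrt.measurable).aestronglyMeasurable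
  have hg_le : ∀ r, ‖g r‖ ≤ 1 := fun r => ha _ (sqrt_nonneg r)
  have hγK : ∀ k, γ k = ∫ r in Ioi 0, g r * poissonWeight k r := fun k => by
    rw [hγ, ← integral_const_mul]
    refine setIntegral_congr_fun measurableSet_Ioi fun r _ => ?_
    simp only [g, poissonWeight]
    push_cast
    ring
  have hdiff : γ (m + 1) - γ m =
      ∫ r in Ioi 0, g r * ((poissonWeight (m + 1) r - poissonWeight m r : ℝ) : ℂ) := by
    rw [hγK, hγK, ← integral_sub (integrableOn_mul_poissonWeight hg hg_le _)
      (integrableOn_mul_poissonWeight hg hg_le _)]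
    simp only [Complex.ofReal_sub, mul_sub]
  refine ⟨?_, integral_abs_poissonWeight_succ_sub m,
    two_mul_poissonWeight_self_le m.succ_ne_zero⟩
  rw [hdiff]
  exact norm_setIntegral_mul_ofReal_le measurableSet_Ioi
    ((integrableOn_poissonWeight _).sub (integrableOn_poissonWeight _)) fun r _ => hg_le r
end

section
/- Define F(x,y) = exp((2x² + 1)(ln y − ln x) + x² − y²) for x, y > 0. For every ε > 0 there exists h > 1 such that for all x ≥ 1, ∫_{u ∈ [−x,∞), |u| > h} F(x, x+u) du ≤ ε. -/
/-!
Since `log t ≤ t - 1`, the exponent `ln F(x, x + u)` is at most `u / x - u² ≤ -|u|` once `x ≥ 1`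
and `|u| ≥ 2`. Hence the tail integral over `|u| > h` is at most `∫_{|u| > h} e^{-|u|} = 2 e^{-h}`,
which is `≤ ε` for `h ≥ log (2 / ε)`.
-/

open Real Set MeasureTheory

theorem integral_exp_neg_abs_of_lt_abs {h : ℝ} (hh : 0 ≤ h) :
    ∫ u in {u : ℝ | h < |u|}, exp (-|u|) = 2 * exp (-h) := by
  have hind : ({u : ℝ | h < |u|}.indicator fun u => exp (-|u|)) =
      fun u => (Ioi h).indicator (fun t => exp (-t)) |u| := by
    ext u; by_cases hu : h < |u| <;> simp [indicator, hu]
  have hmeas : MeasurableSet {u : ℝ | h < |u|} := measurableSet_lt measurable_const measurable_abs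
  rw [← integral_indicator hmeas, hind, integral_comp_abs, setIntegral_indicator measurableSet_Ioi,
    Ioi_inter_Ioi, sup_eq_right.2 hh, integral_exp_neg_Ioi]

theorem integrableOn_exp_neg_abs_of_lt_abs {h : ℝ} (hh : 0 ≤ h) :
    IntegrableOn (fun u : ℝ => exp (-|u|)) {u : ℝ | h < |u|} :=
  Integrable.of_integral_ne_zero <| by
    rw [integral_exp_neg_abs_of_lt_abs hh]; positivity

/-- `ln F(x, y)`. -/
noncomputable def logF (x y : ℝ) : ℝ :=
  (2 * x ^ 2 + 1) * (log y - log x) + x ^ 2 - y ^ 2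

theorem logF_le {x y : ℝ} (hx : 0 < x) (hy : 0 < y) :
    logF x y ≤ (y - x) / x - (y - x) ^ 2 := by
  have hlog : log y - log x ≤ (y - x) / x := by
    rw [← log_div hy.ne' hx.ne', sub_div, div_self hx.ne']
    exact log_le_sub_one_of_pos (by positivity)
  calc logF x y ≤ (2 * x ^ 2 + 1) * ((y - x) / x) + x ^ 2 - y ^ 2 := by
        unfold logF; gcongr
    _ = (y - x) / x - (y - x) ^ 2 := by field_simp; ring

theorem logF_add_le_neg_abs {x u : ℝ} (hx : 1 ≤ x) (hxu : 0 < x + u) (hu : 2 ≤ |u|) :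
    logF x (x + u) ≤ -|u| := by
  have hux : u / x ≤ |u| := by
    rw [div_le_iff₀ (by linarith)]
    nlinarith [le_abs_self u, abs_nonneg u]
  have := logF_le (x := x) (by linarith) hxu
  rw [add_sub_cancel_left] at this
  nlinarith [sq_abs u]

theorem stmt_12
    (F : ℝ → ℝ → ℝ)
    (hF : ∀ x y : ℝ, 0 < x → 0 < y →
      F x y = Real.exp ((2 * x ^ 2 + 1) * (Real.log y - Real.log x) + x ^ 2 - y ^ 2))
    (ε : ℝ) (hε : 0 < ε) :
    ∃ h : ℝ, 1 < h ∧ ∀ x : ℝ, 1 ≤ x →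
      ∫ u in {u : ℝ | -x ≤ u ∧ h < |u|}, F x (x + u) ≤ ε := by
  set h := max 2 (log (2 / ε))
  have hh : 2 ≤ h := le_max_left _ _
  refine ⟨h, by linarith, fun x hx => ?_⟩
  set S := {u : ℝ | -x ≤ u ∧ h < |u|}
  have hS : MeasurableSet S :=
    measurableSet_Ici.inter (measurableSet_lt measurable_const measurable_abs)
  -- `F x 0` is unconstrained, but `u = -x` is a null set.
  have hbound : ∀ᵐ u ∂volume.restrict S, 0 ≤ F x (x + u) ∧ F x (x + u) ≤ exp (-|u|) := by
    rw [ae_restrict_iff' hS]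
    filter_upwards [Measure.ae_ne volume (-x)] with u hne ⟨hxu, hu⟩
    have hpos : 0 < x + u := by grind
    rw [hF x (x + u) (by linarith) hpos]
    exact ⟨(exp_pos _).le, exp_le_exp.2 (logF_add_le_neg_abs hx hpos (by linarith))⟩
  have hint := integrableOn_exp_neg_abs_of_lt_abs (by linarith : (0 : ℝ) ≤ h)
  calc ∫ u in S, F x (x + u)
      ≤ ∫ u in S, exp (-|u|) :=
        integral_mono_of_nonneg (hbound.mono fun _ => And.left)
          (hint.mono_set fun _ hu => hu.2) (hbound.mono fun _ => And.right)
    _ ≤ ∫ u in {u : ℝ | h < |u|}, exp (-|u|) :=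
        setIntegral_mono_set hint (.of_forall fun _ => (exp_pos _).le)
          (.of_forall fun _ hu => hu.2)
    _ = 2 * exp (-h) := integral_exp_neg_abs_of_lt_abs (by linarith)
    _ ≤ 2 * exp (-log (2 / ε)) := by gcongr; exact le_max_right _ _
    _ = ε := by rw [exp_neg, exp_log (by positivity)]; field_simp
end

section
/- Define F(x,y) = exp((2x²+1)(ln y − ln x) + x² − y²). Let h ≥ 1 and h < L < x and |u| ≤ h with x + u > 0. Then |F(x, x+u)·e^{2u²} − 1| ≤ e^{5h³/L} − 1. -/
/-!
Put `t = u / x`, so that `|t| ≤ h / x < 1`. Expanding `(x + u)² = x² (1 + t)²` gives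
`F(x, x + u) e^{2u²} = exp E` with `E = 2x² (log (1 + t) - t + t²/2) + log (1 + t)`.
If `|t| ≤ 2/5`, the Taylor bounds `|log (1 + t) - t + t²/2| ≤ 5/3 |t|³` and
`|log (1 + t)| ≤ 5/3 |t|` give `|E| ≤ 10/3 |u|³/x + 5/3 |u|/x ≤ 5h³/L`.
If `|t| > 2/5`, then `x < 5h/2`, so `5h³/L > 2h²`,
which already exceeds both `log 2` and the one-sided bound `E ≤ u² + t ≤ 2h²` coming from
`log (1 + t) ≤ t`; since `e^E - 1 ≥ -1`, this suffices.
-/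

open Real

lemma abs_exp_sub_one_le_of_abs_le {g B : ℝ} (hg : |g| ≤ B) : |exp g - 1| ≤ exp B - 1 := by
  have hlow := add_one_le_exp (-g)
  have hprod : exp g * exp (-g) = 1 := by rw [← exp_add, add_neg_cancel, exp_zero]
  rw [abs_le] at hg ⊢
  have hup : exp g ≤ exp B := exp_le_exp.mpr hg.2
  have hneg : exp (-g) ≤ exp B := exp_le_exp.mpr (by linarith)
  constructor <;> nlinarith [exp_pos g, exp_pos (-g)]

lemma abs_exp_sub_one_le_of_le {g B : ℝ} (hg : g ≤ B) (hB : log 2 ≤ B) :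
    |exp g - 1| ≤ exp B - 1 := by
  have htwo : 2 ≤ exp B := by simpa [exp_log] using exp_le_exp.mpr hB
  rw [abs_le]
  constructor
  · linarith [exp_pos g]
  · linarith [exp_le_exp.mpr hg]

lemma abs_log_one_add_sub_le {t : ℝ} (ht : |t| ≤ 2 / 5) :
    |log (1 + t) - t + t ^ 2 / 2| ≤ 5 / 3 * |t| ^ 3 := by
  have key := abs_log_sub_add_sum_range_le (x := -t) (by rw [abs_neg]; linarith) 2
  simp only [Finset.sum_range_succ, Finset.sum_range_zero, abs_neg, sub_neg_eq_add] at key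
  norm_num at key
  calc |log (1 + t) - t + t ^ 2 / 2| = |-t + t ^ 2 / 2 + log (1 + t)| := by ring_nf
    _ ≤ |t| ^ 3 / (1 - |t|) := key
    _ ≤ 5 / 3 * |t| ^ 3 := by
      rw [div_le_iff₀ (by linarith)]
      nlinarith [pow_nonneg (abs_nonneg t) 3]

lemma abs_log_one_add_le {t : ℝ} (ht : |t| ≤ 2 / 5) : |log (1 + t)| ≤ 5 / 3 * |t| := by
  have key := abs_log_sub_add_sum_range_le (x := -t) (by rw [abs_neg]; linarith) 0
  simp only [Finset.sum_range_zero, zero_add, pow_one, abs_neg, sub_neg_eq_add] at key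
  calc |log (1 + t)| ≤ |t| / (1 - |t|) := key
    _ ≤ 5 / 3 * |t| := by
      rw [div_le_iff₀ (by linarith)]
      nlinarith [abs_nonneg t]

noncomputable def ratioExponent (x t : ℝ) : ℝ :=
  2 * x ^ 2 * (log (1 + t) - t + t ^ 2 / 2) + log (1 + t)

lemma exponent_add_sq_eq_ratioExponent {x u : ℝ} (hx : 0 < x) (hxu : 0 < x + u) :
    (2 * x ^ 2 + 1) * (log (x + u) - log x) + x ^ 2 - (x + u) ^ 2 + 2 * u ^ 2
      = ratioExponent x (u / x) := by
  have hxu' : x + u = x * (1 + u / x) := by field_simp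
  have h1t : 0 < 1 + u / x := by rw [hxu'] at hxu; exact pos_of_mul_pos_right hxu hx.le
  rw [ratioExponent, hxu', log_mul hx.ne' h1t.ne']
  field_simp
  ring

lemma abs_ratioExponent_le (x : ℝ) {t : ℝ} (ht : |t| ≤ 2 / 5) :
    |ratioExponent x t| ≤ 10 / 3 * x ^ 2 * |t| ^ 3 + 5 / 3 * |t| := by
  calc |ratioExponent x t|
      ≤ 2 * x ^ 2 * |log (1 + t) - t + t ^ 2 / 2| + |log (1 + t)| := by
        rw [ratioExponent]
        refine (abs_add_le _ _).trans_eq ?_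
        rw [abs_mul, abs_of_nonneg (by positivity)]
    _ ≤ 2 * x ^ 2 * (5 / 3 * |t| ^ 3) + 5 / 3 * |t| := by
        gcongr
        exacts [abs_log_one_add_sub_le ht, abs_log_one_add_le ht]
    _ = 10 / 3 * x ^ 2 * |t| ^ 3 + 5 / 3 * |t| := by ring

lemma ratioExponent_le (x : ℝ) {t : ℝ} (ht : -1 < t) :
    ratioExponent x t ≤ (x * t) ^ 2 + t := by
  have hlog : log (1 + t) ≤ t := by linarith [log_le_sub_one_of_pos (by linarith : 0 < 1 + t)]
  rw [ratioExponent]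
  nlinarith [mul_nonneg (sq_nonneg x) (sub_nonneg.2 hlog)]

lemma abs_exp_ratioExponent_sub_one_le {h L x u : ℝ} (hh : 1 ≤ h) (hhL : h < L) (hLx : L < x)
    (hu : |u| ≤ h) : |exp (ratioExponent x (u / x)) - 1| ≤ exp (5 * h ^ 3 / L) - 1 := by
  have hx : 0 < x := by linarith
  have hxt : x * (u / x) = u := mul_div_cancel₀ u hx.ne'
  have habs : |u / x| = |u| / x := by rw [abs_div, abs_of_pos hx]
  have hLbound : 5 * h ^ 3 / x ≤ 5 * h ^ 3 / L := by gcongr; linarith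
  rcases le_or_gt |u / x| (2 / 5) with hsmall | hlarge
  · refine abs_exp_sub_one_le_of_abs_le ((abs_ratioExponent_le x hsmall).trans ?_)
    refine le_trans ?_ hLbound
    have hu_le : |u| ≤ h ^ 3 := hu.trans (le_self_pow₀ hh (by norm_num))
    calc 10 / 3 * x ^ 2 * |u / x| ^ 3 + 5 / 3 * |u / x|
        = (10 / 3 * |u| ^ 3 + 5 / 3 * |u|) / x := by rw [habs]; field_simp
      _ ≤ (10 / 3 * h ^ 3 + 5 / 3 * h ^ 3) / x := by gcongr
      _ = 5 * h ^ 3 / x := by ring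
  · have htlt : |u / x| < 1 := by rw [habs, div_lt_one hx]; linarith
    have hx5 : 2 * x < 5 * h := by rw [habs, lt_div_iff₀ hx] at hlarge; linarith
    have hbig : 2 * h ^ 2 ≤ 5 * h ^ 3 / L := by
      rw [le_div_iff₀ (by linarith)]
      calc 2 * h ^ 2 * L = h ^ 2 * (2 * L) := by ring
        _ ≤ h ^ 2 * (5 * h) := mul_le_mul_of_nonneg_left (by linarith) (sq_nonneg h)
        _ = 5 * h ^ 3 := by ring
    have hE : ratioExponent x (u / x) ≤ 2 * h ^ 2 := by
      have := ratioExponent_le x (abs_lt.mp htlt).1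
      rw [hxt] at this
      nlinarith [sq_abs u, abs_nonneg u, (abs_lt.mp htlt).2]
    have hlog2 : log 2 ≤ 2 * h ^ 2 := by
      nlinarith [log_le_sub_one_of_pos (by norm_num : (0 : ℝ) < 2)]
    exact abs_exp_sub_one_le_of_le (hE.trans hbig) (hlog2.trans hbig)

theorem stmt_13
    (F : ℝ → ℝ → ℝ)
    (hF : ∀ x y : ℝ, 0 < x → 0 < y →
      F x y = Real.exp ((2 * x ^ 2 + 1) * (Real.log y - Real.log x) + x ^ 2 - y ^ 2))
    (h L x u : ℝ) (hh : 1 ≤ h) (hhL : h < L) (hLx : L < x) (hu : |u| ≤ h)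
    (hxu : 0 < x + u) :
    |F x (x + u) * Real.exp (2 * u ^ 2) - 1| ≤ Real.exp (5 * h ^ 3 / L) - 1 := by
  have hx : 0 < x := by linarith
  rw [hF x (x + u) hx hxu, ← exp_add, exponent_add_sq_eq_ratioExponent hx hxu]
  exact abs_exp_ratioExponent_sub_one_le hh hhL hLx hu
end

section
/- For every bounded measurable a : [0,∞) → ℂ, lim_{n → ∞} |γ_a(n) − √(2/π)·∫_0^∞ a(y)·e^{−2(y − √n)²} dy| = 0, where γ_a(n) = (1/n!)·∫_0^∞ a(√r)·e^{-r}·r^n dr. -/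
/-!
Substituting `r = y²` writes `γ_a(n)` as `∫ a · gₙ`, where `gₙ(y) = 2 y^(2n+1) e^(-y²) / n!` is the
density of `√X` for `X ∼ Γ(n + 1, 1)`, while the second term is `∫ a · H(· - √n)` with `H` the
density of `N(0, 1/4)`. Their difference is therefore at most `sup |a| · ‖gₙ - H(· - √n)‖₁`.
Stirling's formula gives the local limit `gₙ(s + √n) → H(s)` pointwise, and since all of these are
probability densities, Scheffé's lemma upgrades it to convergence in `L¹`.
-/

open MeasureTheory Real Set Filter Topology ProbabilityTheory
open scoped Nat NNReal

section

variable {α ι : Type*} [MeasurableSpace α] {μ : Measure α}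

theorem tendsto_integral_abs_sub_of_tendsto {l : Filter ι} [l.IsCountablyGenerated]
    {f : ι → α → ℝ} {g : α → ℝ} (hf : ∀ i, 0 ≤ f i) (hg : 0 ≤ g)
    (hfi : ∀ i, Integrable (f i) μ) (hgi : Integrable g μ)
    (hmass : ∀ i, ∫ x, f i x ∂μ = ∫ x, g x ∂μ)
    (hlim : ∀ᵐ x ∂μ, Tendsto (fun i => f i x) l (𝓝 (g x))) :
    Tendsto (fun i => ∫ x, |f i x - g x| ∂μ) l (𝓝 0) := by
  -- `|u - v| = u + v - 2 min u v`, and `min (f i) g → g` dominatedly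
  have hmin : Tendsto (fun i => ∫ x, min (f i x) (g x) ∂μ) l (𝓝 (∫ x, g x ∂μ)) := by
    refine tendsto_integral_filter_of_dominated_convergence g
      (Eventually.of_forall fun i => ((hfi i).inf hgi).aestronglyMeasurable)
      (Eventually.of_forall fun i => Eventually.of_forall fun x => ?_) hgi ?_
    · rw [Real.norm_of_nonneg (le_min (hf i x) (hg x))]
      exact min_le_right _ _
    · filter_upwards [hlim] with x hx
      simpa using hx.min (tendsto_const_nhds (x := g x))
  have hsplit : ∀ i, ∫ x, |f i x - g x| ∂μ = 2 * ∫ x, g x ∂μ - 2 * ∫ x, min (f i x) (g x) ∂μ := by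
    intro i
    have hmin_i : Integrable (fun x => min (f i x) (g x)) μ := (hfi i).inf hgi
    calc ∫ x, |f i x - g x| ∂μ = ∫ x, (f i x + g x - 2 * min (f i x) (g x)) ∂μ := by
          congr 1 with x
          rcases le_total (f i x) (g x) with h | h
          · rw [abs_of_nonpos (by linarith), min_eq_left h]; ring
          · rw [abs_of_nonneg (by linarith), min_eq_right h]; ring
      _ = _ := by
          have hfg : Integrable (fun x => f i x + g x) μ := (hfi i).add hgi
          rw [integral_sub hfg (hmin_i.const_mul 2), integral_add (hfi i) hgi,
            integral_const_mul, hmass]; ring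
  simp_rw [hsplit]
  simpa using (hmin.const_mul 2).const_sub (2 * ∫ x, g x ∂μ)

theorem norm_integral_smul_sub_le {E : Type*} [NormedAddCommGroup E] [NormedSpace ℝ E]
    {b : α → E} {C : ℝ} (hb : AEStronglyMeasurable b μ) (hbC : ∀ᵐ x ∂μ, ‖b x‖ ≤ C)
    {f g : α → ℝ} (hf : Integrable f μ) (hg : Integrable g μ) :
    ‖∫ x, f x • b x ∂μ - ∫ x, g x • b x ∂μ‖ ≤ C * ∫ x, |f x - g x| ∂μ := by
  have hfb : Integrable (fun x => f x • b x) μ := hf.smul_bdd C hb hbC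
  have hgb : Integrable (fun x => g x • b x) μ := hg.smul_bdd C hb hbC
  rw [← integral_sub hfb hgb, ← integral_const_mul]
  refine norm_integral_le_of_norm_le ((hf.sub hg).abs.const_mul C) ?_
  filter_upwards [hbC] with x hx
  rw [← sub_smul, norm_smul, Real.norm_eq_abs, mul_comm C]
  exact mul_le_mul_of_nonneg_left hx (abs_nonneg _)

end

noncomputable def sqrtGammaPDF (n : ℕ) (y : ℝ) : ℝ :=
  (Ioi 0).indicator (fun y => 2 * y ^ (2 * n + 1) * exp (-y ^ 2) / n !) y

lemma sqrtGammaPDF_nonneg (n : ℕ) : 0 ≤ sqrtGammaPDF n := fun y =>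
  indicator_nonneg (fun y (hy : 0 < y) => by positivity) y

lemma setIntegral_Ioi_sqrtGammaPDF_smul {E : Type*} [NormedAddCommGroup E] [NormedSpace ℝ E]
    (n : ℕ) (g : ℝ → E) :
    ∫ y in Ioi 0, sqrtGammaPDF n y • g y =
      (n ! : ℝ)⁻¹ • ∫ r in Ioi 0, (exp (-r) * r ^ n) • g √r := by
  rw [← integral_comp_rpow_Ioi_of_pos (E := E) (g := fun r => (exp (-r) * r ^ n) • g √r)
    (by norm_num : (0 : ℝ) < 2), ← integral_smul]
  refine setIntegral_congr_fun measurableSet_Ioi fun y (hy : 0 < y) => ?_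
  have hsq : y ^ (2 : ℝ) = y ^ 2 := by norm_cast
  rw [sqrtGammaPDF, indicator_of_mem (show y ∈ Ioi 0 from hy), hsq, sqrt_sq hy.le,
    smul_smul, smul_smul]
  congr 1
  norm_num
  ring

lemma integral_exp_neg_mul_pow (n : ℕ) : ∫ r in Ioi 0, exp (-r) * r ^ n = n ! := by
  rw [← Real.Gamma_nat_eq_factorial, Real.Gamma_eq_integral (by positivity)]
  refine setIntegral_congr_fun measurableSet_Ioi fun r _ => ?_
  rw [add_sub_cancel_right, Real.rpow_natCast]

lemma integral_sqrtGammaPDF (n : ℕ) : ∫ y, sqrtGammaPDF n y = 1 := by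
  have h := setIntegral_Ioi_sqrtGammaPDF_smul n (fun _ => (1 : ℝ))
  simp only [smul_eq_mul, mul_one] at h
  rw [integral_exp_neg_mul_pow, inv_mul_cancel₀ (by positivity)] at h
  rwa [setIntegral_eq_integral_of_forall_compl_eq_zero (f := sqrtGammaPDF n)
    fun y hy => indicator_of_notMem hy _] at h

lemma integrable_sqrtGammaPDF (n : ℕ) : Integrable (sqrtGammaPDF n) :=
  Integrable.of_integral_ne_zero (by rw [integral_sqrtGammaPDF]; exact one_ne_zero)

lemma abs_log_one_add_sub_add_le {u : ℝ} (hu : |u| ≤ 1 / 2) :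
    |log (1 + u) - u + u ^ 2 / 2| ≤ 2 * |u| ^ 3 := by
  have h := abs_log_sub_add_sum_range_le (x := -u) (by rw [abs_neg]; linarith) 2
  simp only [Finset.sum_range_succ, Finset.sum_range_zero, abs_neg, sub_neg_eq_add] at h
  calc |log (1 + u) - u + u ^ 2 / 2| ≤ |u| ^ 3 / (1 - |u|) := by
        convert h using 2; push_cast; ring
    _ ≤ |u| ^ 3 / (1 / 2) := by gcongr; linarith
    _ = 2 * |u| ^ 3 := by ring

lemma tendsto_two_mul_sq_mul_log_one_add_div_sub (s : ℝ) :
    Tendsto (fun t : ℝ => 2 * t ^ 2 * log (1 + s / t) - 2 * s * t) atTop (𝓝 (-s ^ 2)) := by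
  rw [← tendsto_sub_nhds_zero_iff]
  have hbound : ∀ᶠ t : ℝ in atTop,
      |2 * t ^ 2 * log (1 + s / t) - 2 * s * t - -s ^ 2| ≤ 4 * |s| ^ 3 * t⁻¹ := by
    filter_upwards [eventually_ge_atTop (2 * |s|), eventually_gt_atTop 0] with t hst ht
    have hu : |s / t| ≤ 1 / 2 := by
      rw [abs_div, abs_of_pos ht, div_le_iff₀ ht]; linarith
    calc |2 * t ^ 2 * log (1 + s / t) - 2 * s * t - -s ^ 2|
        = |2 * t ^ 2 * (log (1 + s / t) - s / t + (s / t) ^ 2 / 2)| := by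
          congr 1
          field_simp
          ring
      _ = 2 * t ^ 2 * |log (1 + s / t) - s / t + (s / t) ^ 2 / 2| := by
          rw [abs_mul, abs_of_pos (by positivity)]
      _ ≤ 2 * t ^ 2 * (2 * |s / t| ^ 3) := by gcongr; exact abs_log_one_add_sub_add_le hu
      _ = 4 * |s| ^ 3 * t⁻¹ := by
          rw [abs_div, abs_of_pos ht]; field_simp; ring
  refine squeeze_zero_norm' hbound ?_
  simpa only [mul_zero] using (tendsto_inv_atTop_zero (𝕜 := ℝ)).const_mul (4 * |s| ^ 3)

lemma tendsto_one_add_div_sqrt_pow_mul_exp (s : ℝ) :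
    Tendsto (fun n : ℕ => (1 + s / √n) ^ (2 * n + 1) * exp (-2 * s * √n)) atTop
      (𝓝 (exp (-s ^ 2))) := by
  have hsqrt : Tendsto (fun n : ℕ => √(n : ℝ)) atTop atTop :=
    tendsto_sqrt_atTop.comp tendsto_natCast_atTop_atTop
  have hu : Tendsto (fun n : ℕ => 1 + s / √n) atTop (𝓝 1) := by
    simpa using (tendsto_const_nhds.div_atTop hsqrt).const_add 1
  have hexp := (continuous_exp.tendsto _).comp
    ((tendsto_two_mul_sq_mul_log_one_add_div_sub s).comp hsqrt)
  have h := hu.mul hexp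
  rw [one_mul] at h
  refine h.congr' ?_
  filter_upwards [hsqrt.eventually_gt_atTop |s|] with n hn
  have hpos : 0 < 1 + s / √n := by
    have : -1 < s / √n := by
      rw [lt_div_iff₀ ((abs_nonneg s).trans_lt hn)]
      linarith [neg_abs_le s]
    linarith
  have hpow : exp (2 * √n ^ 2 * log (1 + s / √n)) = (1 + s / √n) ^ (2 * n) := by
    rw [sq_sqrt n.cast_nonneg, show (2 : ℝ) * n = (2 * n : ℕ) by push_cast; rfl, exp_nat_mul,
      exp_log hpos]
  simp only [Function.comp_apply]
  rw [sub_eq_add_neg, exp_add, hpow, pow_succ]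
  ring_nf

lemma factorial_eq_stirlingSeq_mul {n : ℕ} (hn : n ≠ 0) :
    (n ! : ℝ) = Stirling.stirlingSeq n * (√2 * √n ^ (2 * n + 1) * exp (-n)) := by
  have hn' : (0 : ℝ) < n := by positivity
  have hden : √(2 * n) * (n / exp 1) ^ n = √2 * √n ^ (2 * n + 1) * exp (-n) := by
    rw [sqrt_mul zero_le_two, pow_succ, pow_mul, sq_sqrt hn'.le, div_pow, ← exp_nat_mul,
      mul_one, exp_neg]
    ring
  rw [Stirling.stirlingSeq, hden, div_mul_cancel₀ _ (by positivity)]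

lemma sqrtGammaPDF_add_sqrt {n : ℕ} (hn : n ≠ 0) {s : ℝ} (hs : 0 < s + √n) :
    sqrtGammaPDF n (s + √n) = √2 / Stirling.stirlingSeq n *
      ((1 + s / √n) ^ (2 * n + 1) * exp (-2 * s * √n)) * exp (-s ^ 2) := by
  have hq : 0 < √(n : ℝ) := sqrt_pos.2 (by positivity)
  have hσ : 0 < Stirling.stirlingSeq n := by
    obtain ⟨m, rfl⟩ := Nat.exists_eq_succ_of_ne_zero hn
    exact Stirling.stirlingSeq'_pos m
  have hexp : exp (-(s + √n) ^ 2) = exp (-n) * exp (-2 * s * √n) * exp (-s ^ 2) := by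
    rw [← exp_add, ← exp_add]
    congr 1
    linear_combination (-1 : ℝ) * sq_sqrt (Nat.cast_nonneg n : (0 : ℝ) ≤ n)
  have hscale : s + √n = √n * (1 + s / √n) := by field_simp; ring
  rw [sqrtGammaPDF, indicator_of_mem (show s + √n ∈ Ioi 0 from hs), hexp,
    factorial_eq_stirlingSeq_mul hn]
  nth_rewrite 1 [hscale]
  rw [mul_pow]
  field_simp
  rw [sq_sqrt zero_le_two]
  ring

lemma gaussianPDFReal_zero_quarter (s : ℝ) :
    gaussianPDFReal 0 (4⁻¹ : ℝ≥0) s = √(2 / π) * exp (-2 * s ^ 2) := by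
  rw [gaussianPDFReal, sub_zero, ← sqrt_inv]
  push_cast
  congr 2
  · field_simp
    norm_num
  · ring

theorem tendsto_sqrtGammaPDF_add_sqrt (s : ℝ) :
    Tendsto (fun n : ℕ => sqrtGammaPDF n (s + √n)) atTop (𝓝 (gaussianPDFReal 0 4⁻¹ s)) := by
  have hσ : Tendsto (fun n => √2 / Stirling.stirlingSeq n) atTop (𝓝 (√2 / √π)) :=
    tendsto_const_nhds.div Stirling.tendsto_stirlingSeq_sqrt_pi (by positivity)
  have h := (hσ.mul (tendsto_one_add_div_sqrt_pow_mul_exp s)).mul_const (exp (-s ^ 2))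
  rw [mul_assoc, ← exp_add, show -s ^ 2 + -s ^ 2 = -2 * s ^ 2 by ring, ← sqrt_div zero_le_two,
    ← gaussianPDFReal_zero_quarter] at h
  refine h.congr' ?_
  filter_upwards [eventually_ne_atTop 0,
    (tendsto_sqrt_atTop.comp tendsto_natCast_atTop_atTop).eventually_gt_atTop (-s)] with n hn hs
  exact (sqrtGammaPDF_add_sqrt hn (by simp only [Function.comp_apply] at hs; linarith)).symm

theorem tendsto_setIntegral_abs_sqrtGammaPDF_sub_gaussianPDFReal :
    Tendsto (fun n : ℕ => ∫ y in Ioi 0, |sqrtGammaPDF n y - gaussianPDFReal 0 4⁻¹ (y - √n)|)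
      atTop (𝓝 0) := by
  have hφ := integrable_gaussianPDFReal 0 4⁻¹
  have hL1 := tendsto_integral_abs_sub_of_tendsto (μ := volume)
    (f := fun (n : ℕ) s => sqrtGammaPDF n (s + √n)) (fun n s => sqrtGammaPDF_nonneg n (s + √n))
    (gaussianPDFReal_nonneg 0 4⁻¹) (fun n => (integrable_sqrtGammaPDF n).comp_add_right _) hφ
    (fun n => by rw [integral_add_right_eq_self (sqrtGammaPDF n), integral_sqrtGammaPDF,
      integral_gaussianPDFReal_eq_one 0 (by norm_num)])
    (ae_of_all _ tendsto_sqrtGammaPDF_add_sqrt)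
  refine squeeze_zero (fun n => setIntegral_nonneg measurableSet_Ioi fun _ _ => abs_nonneg _)
    (fun n => ?_) hL1
  calc ∫ y in Ioi 0, |sqrtGammaPDF n y - gaussianPDFReal 0 4⁻¹ (y - √n)|
      ≤ ∫ y, |sqrtGammaPDF n y - gaussianPDFReal 0 4⁻¹ (y - √n)| :=
        setIntegral_le_integral ((integrable_sqrtGammaPDF n).sub (hφ.comp_sub_right _)).abs
          (ae_of_all _ fun _ => abs_nonneg _)
    _ = ∫ s, |sqrtGammaPDF n (s + √n) - gaussianPDFReal 0 4⁻¹ s| := by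
        rw [← integral_add_right_eq_self _ √n]
        simp only [add_sub_cancel_right]

theorem stmt_16 (a : ℝ → ℂ) (hm : Measurable a)
    (hb : ∃ C : ℝ, ∀ r : ℝ, 0 ≤ r → ‖a r‖ ≤ C) :
    Filter.Tendsto
      (fun n : ℕ =>
        ‖(Nat.factorial n : ℂ)⁻¹ *
              (∫ r in Set.Ioi (0 : ℝ), a (Real.sqrt r) * ((Real.exp (-r) * r ^ n : ℝ) : ℂ)) -
            ((Real.sqrt (2 / Real.pi) : ℝ) : ℂ) *
              ∫ y in Set.Ioi (0 : ℝ),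
                a y * ((Real.exp (-2 * (y - Real.sqrt n) ^ 2) : ℝ) : ℂ)‖)
      Filter.atTop (nhds 0) := by
  obtain ⟨C, hC⟩ := hb
  have hγ : ∀ n : ℕ, (n ! : ℂ)⁻¹ * ∫ r in Ioi 0, a √r * ((exp (-r) * r ^ n : ℝ) : ℂ) =
      ∫ y in Ioi 0, sqrtGammaPDF n y • a y := by
    intro n
    rw [setIntegral_Ioi_sqrtGammaPDF_smul, Complex.real_smul, ← integral_const_mul,
      ← integral_const_mul]
    simp only [Complex.real_smul, mul_comm (a _), Complex.ofReal_inv, Complex.ofReal_natCast]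
  have hφ : ∀ n : ℕ, ((√(2 / π) : ℝ) : ℂ) * ∫ y in Ioi 0, a y * ((exp (-2 * (y - √n) ^ 2) : ℝ) : ℂ) =
      ∫ y in Ioi 0, gaussianPDFReal 0 4⁻¹ (y - √n) • a y := by
    intro n
    rw [← integral_const_mul]
    congr 1 with y
    rw [gaussianPDFReal_zero_quarter, Complex.real_smul]
    push_cast
    ring
  refine squeeze_zero (fun _ => norm_nonneg _) (fun n => ?_)
    (by simpa using tendsto_setIntegral_abs_sqrtGammaPDF_sub_gaussianPDFReal.const_mul C)
  rw [hγ, hφ]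
  exact norm_integral_smul_sub_le hm.aestronglyMeasurable
    (ae_restrict_of_forall_mem measurableSet_Ioi fun y hy => hC y (le_of_lt hy))
    (integrable_sqrtGammaPDF n).integrableOn
    ((integrable_gaussianPDFReal 0 4⁻¹).comp_sub_right _).integrableOn
end
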